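/- Let A ∈ ℝ^{n×n}, and let P = [[A, 0],[0, S]] with S = −cᵀ A⁻¹ b ≠ 0 (a 1×1 Schur complement), where A is invertible. Then the generalized eigenvalues of the preconditioned bordered matrix P⁻¹ M, with M = [[A, b],[cᵀ, 0]], lie in the set {1, (1 ± √5)/2}... specifically, P⁻¹M has eigenvalue 1 with multiplicity at least n − 1. -/

import Mathlib

open Matrix

lemma matrix_rank_add_le {m : Type*} [Fintype m] [DecidableEq m]
    (X Y : Matrix m m ℝ) : (X + Y).rank ≤ X.rank + Y.rank := by
  have hle : LinearMap.range (X + Y).mulVecLin ≤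
      LinearMap.range X.mulVecLin ⊔ LinearMap.range Y.mulVecLin := by
    rintro w ⟨x, rfl⟩
    rw [Matrix.mulVecLin_add]
    exact Submodule.add_mem_sup ⟨x, rfl⟩ ⟨x, rfl⟩
  calc (X + Y).rank
      ≤ Module.finrank ℝ ↥(LinearMap.range X.mulVecLin ⊔ LinearMap.range Y.mulVecLin) :=
        Submodule.finrank_mono hle
    _ ≤ X.rank + Y.rank := Submodule.finrank_add_le_finrank_add_finrank _ _

theorem block_diag_schur_preconditioned_eigenvalues
    (n : ℕ)
    (A : Matrix (Fin n) (Fin n) ℝ) (hA : IsUnit A)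
    (b c : Fin n → ℝ)
    (S : ℝ) (hS : S = -(c ⬝ᵥ A⁻¹.mulVec b)) (hS0 : S ≠ 0)
    (M P : Matrix (Fin n ⊕ Fin 1) (Fin n ⊕ Fin 1) ℝ)
    (hM : M = fromBlocks A (Matrix.replicateCol (Fin 1) b) (Matrix.replicateRow (Fin 1) c) 0)
    (hP : P = fromBlocks A 0 0 (S • (1 : Matrix (Fin 1) (Fin 1) ℝ))) :
    (∀ (lam : ℝ) (v : Fin n ⊕ Fin 1 → ℝ), v ≠ 0 → (P⁻¹ * M).mulVec v = lam • v →
      lam = 1 ∨ lam = (1 + Real.sqrt 5) / 2 ∨ lam = (1 - Real.sqrt 5) / 2) ∧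
    n - 1 ≤ Module.finrank ℝ ↥(LinearMap.ker (Matrix.toLin' (P⁻¹ * M - 1))) := by
  have hAd : IsUnit A.det := (isUnit_iff_isUnit_det A).mp hA
  set u : Fin n → ℝ := A⁻¹.mulVec b with hu
  have hPinv : P⁻¹ = fromBlocks A⁻¹ 0 0 (S⁻¹ • (1 : Matrix (Fin 1) (Fin 1) ℝ)) := by
    apply Matrix.inv_eq_right_inv
    rw [hP, fromBlocks_multiply]
    rw [Matrix.mul_nonsing_inv A hAd]
    simp [Matrix.smul_mul, Matrix.mul_smul, smul_smul, mul_inv_cancel₀ hS0,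
      inv_mul_cancel₀ hS0, ← fromBlocks_one]
  have hcolu : A⁻¹ * Matrix.replicateCol (Fin 1) b = Matrix.replicateCol (Fin 1) u := by
    ext i j
    simp [Matrix.mul_apply, Matrix.replicateCol_apply, hu, Matrix.mulVec, dotProduct]
  have hQM : P⁻¹ * M = fromBlocks 1 (Matrix.replicateCol (Fin 1) u)
      (S⁻¹ • Matrix.replicateRow (Fin 1) c) 0 := by
    rw [hPinv, hM, fromBlocks_multiply, Matrix.nonsing_inv_mul A hAd, hcolu]
    simp [Matrix.smul_mul]
  have hcu : c ⬝ᵥ u = -S := by rw [hS, hu]; ring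
  constructor
  · intro lam v hv h
    set x : Fin n → ℝ := v ∘ Sum.inl with hx
    set y : ℝ := v (Sum.inr 0) with hy
    have hvs : v = Sum.elim x fun _ => y := by
      funext i
      cases i with
      | inl i => rfl
      | inr i => rw [Subsingleton.elim i 0]; rfl
    rw [hQM, hvs, fromBlocks_mulVec] at h
    have e1 : ∀ i, x i + u i * y = lam * x i := by
      intro i
      have := congrFun h (Sum.inl i)
      simpa [Matrix.one_mulVec, Matrix.mulVec, dotProduct] using this
    have e2 : S⁻¹ * (c ⬝ᵥ x) = lam * y := by
      have := congrFun h (Sum.inr 0)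
      simpa [Matrix.mulVec, dotProduct, Matrix.replicateRow_apply, Finset.mul_sum,
        mul_comm, mul_assoc, mul_left_comm] using this
    by_cases hy0 : y = 0
    · left
      have hx0 : x ≠ 0 := by
        intro h0
        apply hv
        rw [hvs, h0, hy0]
        funext i; cases i <;> simp
      obtain ⟨i, hi⟩ := Function.ne_iff.mp hx0
      have h1 := e1 i
      rw [hy0, mul_zero, add_zero] at h1
      have h2 : (lam - 1) * x i = 0 := by linarith
      rcases mul_eq_zero.mp h2 with h3 | h3
      · linarith
      · exact absurd h3 hi
    · exfalso
      have key : ∀ i, (lam - 1) * x i = y * u i := by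
        intro i
        linear_combination -(e1 i)
      have hxw : (lam - 1) • x = y • u := by
        funext i
        simpa [smul_eq_mul] using key i
      have hdx : (lam - 1) * (c ⬝ᵥ x) = y * (c ⬝ᵥ u) := by
        have := congrArg (fun w => c ⬝ᵥ w) hxw
        simpa [smul_eq_mul] using this
      rw [hcu] at hdx
      have h3 : c ⬝ᵥ x = S * (lam * y) := by
        field_simp at e2
        linarith
      rw [h3] at hdx
      have h4 : S * y * (lam * lam - lam + 1) = 0 := by linear_combination hdx
      have h5 : lam * lam - lam + 1 = 0 := by
        rcases mul_eq_zero.mp h4 with h | h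
        · exact absurd h (mul_ne_zero hS0 hy0)
        · exact h
      nlinarith [sq_nonneg (lam - 1 / 2)]
  · have hTeq : P⁻¹ * M - 1 =
        Matrix.replicateCol (Fin 1) ((Sum.elim u fun _ => -1 : Fin n ⊕ Fin 1 → ℝ)) *
          Matrix.replicateRow (Fin 1) ((Sum.elim 0 1 : Fin n ⊕ Fin 1 → ℝ)) +
        Matrix.replicateCol (Fin 1) ((Sum.elim 0 1 : Fin n ⊕ Fin 1 → ℝ)) *
          Matrix.replicateRow (Fin 1) ((Sum.elim (S⁻¹ • c) 0 : Fin n ⊕ Fin 1 → ℝ)) := by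
      rw [hQM, ← fromBlocks_one]
      ext i j
      cases i <;> cases j <;>
        simp [Matrix.mul_apply, Matrix.replicateCol_apply, Matrix.replicateRow_apply,
          Matrix.one_apply, Matrix.sub_apply, Fin.fin_one_eq_zero]
    have hrank : (P⁻¹ * M - 1).rank ≤ 2 := by
      rw [hTeq]
      refine le_trans (matrix_rank_add_le _ _) ?_
      have h1 : (Matrix.replicateCol (Fin 1) ((Sum.elim u fun _ => -1 : Fin n ⊕ Fin 1 → ℝ)) *
          Matrix.replicateRow (Fin 1) ((Sum.elim 0 1 : Fin n ⊕ Fin 1 → ℝ))).rank ≤ 1 := by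
        refine le_trans (Matrix.rank_mul_le_left _ _) ?_
        simpa using Matrix.rank_le_card_width (Matrix.replicateCol (Fin 1) ((Sum.elim u fun _ => -1 : Fin n ⊕ Fin 1 → ℝ)))
      have h2 : (Matrix.replicateCol (Fin 1) ((Sum.elim 0 1 : Fin n ⊕ Fin 1 → ℝ)) *
          Matrix.replicateRow (Fin 1) ((Sum.elim (S⁻¹ • c) 0 : Fin n ⊕ Fin 1 → ℝ))).rank ≤ 1 := by
        refine le_trans (Matrix.rank_mul_le_left _ _) ?_
        simpa using Matrix.rank_le_card_width
          (Matrix.replicateCol (Fin 1) ((Sum.elim 0 1 : Fin n ⊕ Fin 1 → ℝ)))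
      omega
    have hrn := LinearMap.finrank_range_add_finrank_ker (Matrix.toLin' (P⁻¹ * M - 1))
    have hcard : Module.finrank ℝ (Fin n ⊕ Fin 1 → ℝ) = n + 1 := by
      simp [Module.finrank_fintype_fun_eq_card]
    have hrange : Module.finrank ℝ ↥(LinearMap.range (Matrix.toLin' (P⁻¹ * M - 1))) =
        (P⁻¹ * M - 1).rank := by
      rw [Matrix.toLin'_apply']
      rfl
    rw [hcard, hrange] at hrn
    omega
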